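/- arXiv:2211.05632 — 3 statements merged into one kernel-verified Lean document; each statement's English description precedes it below -/
import Mathlib

section
/- (Probabilistic core of Theorem 1.) Let (Ω, 𝔉, P) carry a filtration (𝔉_t)_{t=0}^T, let θ⋆ ∈ Θ, and for each t ∈ {1, …, T} let α_t, β_t : Ω → ℝ^d be 𝔉_t-measurable with ‖α_t‖₂ ≤ 1 and ‖β_t‖₂ ≤ 1 almost surely, and let θ_t be a Θ-valued 𝔉_{t−1}-measurable random element, such that almost surely E[⟨α_t, θ⋆⟩ | 𝔉_{t−1}] = ⟨g(θ_t), θ⋆⟩ and E[⟨β_t, θ⋆⟩ | 𝔉_{t−1}] = ⟨g(θ⋆), θ⋆⟩. Then for every δ ∈ (0,1), with probability at least 1 − δ, | Σ_{t=1}^T ⟨β_t − α_t, θ⋆⟩ − Σ_{t=1}^T ⟨g(θ⋆) − g(θ_t), θ⋆⟩ | ≤ 2√(8 T log(4/δ)). (In the paper, α_t is the action played by the contextual algorithm, β_t is the optimal contextual action, the first sum is the regret of the contextual algorithm, and the second sum is the regret of the simulated linear bandit algorithm.) -/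
open MeasureTheory ProbabilityTheory Real Finset
open scoped RealInnerProductSpace NNReal

/-!
With `Y_t = ⟪β_t - α_t, θ⋆⟫`, the hypotheses give `E[Y_t | 𝔉_{t-1}] = ⟪g θ⋆ - g θ_t, θ⋆⟫`, so the
quantity inside the absolute value is the sum of the martingale differences
`D_t = Y_t - E[Y_t | 𝔉_{t-1}]`, and `|D_t| ≤ 4`. Conditionally on the past, `exp (l D_t)` lies below
the chord of `exp` over `[-4 l, 4 l]`, whose conditional mean is `cosh (4 l) ≤ exp (16 l² / 2)`;
peeling off one step at a time shows that `∑ D_t` is sub-Gaussian with variance proxy `16 T`, and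
the Chernoff bound on both tails leaves probability at most `δ / 2` outside the claimed event.
-/

lemma norm_exp_mul_le_of_abs_le (l : ℝ) {c x : ℝ} (hx : |x| ≤ c) :
    ‖exp (l * x)‖ ≤ exp (|l| * c) := by
  rw [norm_of_nonneg (exp_pos _).le, exp_le_exp]
  calc l * x ≤ |l| * |x| := by rw [← abs_mul]; exact le_abs_self _
    _ ≤ |l| * c := by gcongr

lemma exp_mul_le_cosh_add_sinh_div_mul (l : ℝ) {c x : ℝ} (hx : |x| ≤ c) :
    exp (l * x) ≤ cosh (l * c) + sinh (l * c) / c * x := by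
  obtain rfl | hc := ((abs_nonneg x).trans hx).eq_or_lt
  · simp [abs_nonpos_iff.1 hx]
  obtain ⟨hx₁, hx₂⟩ := abs_le.1 hx
  have ha : 0 ≤ (c - x) / (2 * c) := div_nonneg (by linarith) (by linarith)
  have hb : 0 ≤ (c + x) / (2 * c) := div_nonneg (by linarith) (by linarith)
  have hconv := convexOn_exp.2 (Set.mem_univ (-(l * c))) (Set.mem_univ (l * c)) ha hb
    (by field_simp; ring)
  have hcomb : (c - x) / (2 * c) * -(l * c) + (c + x) / (2 * c) * (l * c) = l * x := by
    field_simp; ring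
  simp only [smul_eq_mul, hcomb] at hconv
  calc exp (l * x) ≤ _ := hconv
    _ = cosh (l * c) + sinh (l * c) / c * x := by rw [cosh_eq, sinh_eq]; field_simp; ring

lemma abs_inner_sub_le_two {E : Type*} [NormedAddCommGroup E] [InnerProductSpace ℝ E] {a b v : E}
    (ha : ‖a‖ ≤ 1) (hb : ‖b‖ ≤ 1) (hv : ‖v‖ ≤ 1) : |⟪b - a, v⟫| ≤ 2 :=
  calc |⟪b - a, v⟫| ≤ ‖b - a‖ * ‖v‖ := abs_real_inner_le_norm _ _
    _ ≤ (‖b‖ + ‖a‖) * 1 := by gcongr; exact norm_sub_le _ _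
    _ ≤ 2 := by linarith

lemma condExp_inner_sub_ae_eq {Ω E : Type*} {m0 : MeasurableSpace Ω} {P : Measure Ω}
    [NormedAddCommGroup E] [InnerProductSpace ℝ E]
    (m : MeasurableSpace Ω) {a b : Ω → E} (ha : Integrable a P) (hb : Integrable b P) (v : E) :
    P[fun ω => ⟪b ω - a ω, v⟫|m] =ᵐ[P] P[fun ω => ⟪b ω, v⟫|m] - P[fun ω => ⟪a ω, v⟫|m] := by
  simp_rw [inner_sub_left]
  exact condExp_sub (hb.inner_const v) (ha.inner_const v) m

namespace ProbabilityTheory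

variable {Ω : Type*} {m m0 : MeasurableSpace Ω} {P : Measure Ω} [IsProbabilityMeasure P]

lemma condExp_exp_mul_le_of_condExp_eq_zero (hm : m ≤ m0) {Y : Ω → ℝ}
    (hYm : AEStronglyMeasurable Y P) {c : ℝ} (hY : ∀ᵐ ω ∂P, |Y ω| ≤ c) (hY0 : P[Y|m] =ᵐ[P] 0)
    (l : ℝ) : P[fun ω => exp (l * Y ω)|m] ≤ᵐ[P] fun _ => exp (c ^ 2 * l ^ 2 / 2) := by
  have hYint : Integrable Y P := .of_bound hYm c (by simpa only [norm_eq_abs] using hY)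
  have hYexp : Integrable (fun ω => exp (l * Y ω)) P :=
    integrable_exp_mul_of_mem_Icc hYm.aemeasurable (hY.mono fun _ => abs_le.1)
  set r := sinh (l * c) / c
  have hchord : P[fun ω => exp (l * Y ω)|m] ≤ᵐ[P] P[fun ω => cosh (l * c) + r * Y ω|m] :=
    condExp_mono hYexp ((integrable_const _).add (hYint.const_mul r))
      (by filter_upwards [hY] with ω h using exp_mul_le_cosh_add_sinh_div_mul l h)
  have hlin : P[fun ω => cosh (l * c) + r * Y ω|m] =ᵐ[P] fun _ => cosh (l * c) := by
    filter_upwards [condExp_add (integrable_const (cosh (l * c))) (hYint.const_mul r) m,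
      condExp_smul (μ := P) r Y m, hY0] with ω hadd hsmul h0
    have hsmul' : P[fun ω => r * Y ω|m] ω = r * P[Y|m] ω := hsmul
    refine hadd.trans ?_
    rw [Pi.add_apply, condExp_const hm, hsmul', h0, Pi.zero_apply, mul_zero, add_zero]
  filter_upwards [hchord, hlin] with ω h1 h2
  calc _ ≤ cosh (l * c) := h1.trans h2.le
    _ ≤ exp ((l * c) ^ 2 / 2) := cosh_le_exp_half_sq _
    _ = exp (c ^ 2 * l ^ 2 / 2) := by ring_nf

lemma HasSubgaussianMGF.add_of_condExp_eq_zero (hm : m ≤ m0) {X Y : Ω → ℝ} {cX c : ℝ≥0}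
    (hX : HasSubgaussianMGF X cX P) (hXm : StronglyMeasurable[m] X)
    (hYm : AEStronglyMeasurable Y P) (hY : ∀ᵐ ω ∂P, |Y ω| ≤ c) (hY0 : P[Y|m] =ᵐ[P] 0) :
    HasSubgaussianMGF (fun ω => X ω + Y ω) (cX + c ^ 2) P := by
  have hYexp : ∀ l, Integrable (fun ω => exp (l * Y ω)) P := fun _ =>
    integrable_exp_mul_of_mem_Icc hYm.aemeasurable (hY.mono fun _ => abs_le.1)
  have hprod : ∀ l, Integrable (fun ω => exp (l * X ω) * exp (l * Y ω)) P := fun l =>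
    (hX.integrable_exp_mul l).mul_bdd (hYexp l).aestronglyMeasurable
      (c := exp (|l| * c)) (by filter_upwards [hY] with ω h using norm_exp_mul_le_of_abs_le l h)
  refine ⟨fun l => by simpa only [mul_add, exp_add] using hprod l, fun l => ?_⟩
  calc mgf (fun ω => X ω + Y ω) P l
      = ∫ ω, P[(fun ω => exp (l * X ω)) * fun ω => exp (l * Y ω)|m] ω ∂P := by
        rw [integral_condExp hm]; simp only [mgf, mul_add, exp_add, Pi.mul_def]
    _ = ∫ ω, exp (l * X ω) * P[fun ω => exp (l * Y ω)|m] ω ∂P :=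
        integral_congr_ae (condExp_mul_of_stronglyMeasurable_left
          (continuous_exp.comp_stronglyMeasurable (hXm.const_mul l)) (hprod l) (hYexp l))
    _ ≤ ∫ ω, exp (l * X ω) * exp (c ^ 2 * l ^ 2 / 2) ∂P := by
        refine integral_mono_of_nonneg ?_ ((hX.integrable_exp_mul l).mul_const _) ?_
        · filter_upwards [condExp_nonneg (m := m) (μ := P)
            (Filter.Eventually.of_forall fun ω => (exp_pos (l * Y ω)).le)] with ω h
          exact mul_nonneg (exp_pos _).le h
        · filter_upwards [condExp_exp_mul_le_of_condExp_eq_zero hm hYm hY hY0 l] with ω h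
          exact mul_le_mul_of_nonneg_left h (exp_pos _).le
    _ = mgf X P l * exp (c ^ 2 * l ^ 2 / 2) := integral_mul_const _ _
    _ ≤ exp (cX * l ^ 2 / 2) * exp (c ^ 2 * l ^ 2 / 2) := by gcongr; exact hX.mgf_le l
    _ = exp (↑(cX + c ^ 2) * l ^ 2 / 2) := by rw [← exp_add]; push_cast; ring_nf

lemma hasSubgaussianMGF_sum_Icc_of_condExp_eq_zero (ℱ : Filtration ℕ m0) {X : ℕ → Ω → ℝ}
    {c : ℝ≥0} {n : ℕ} (hmeas : ∀ t ∈ Icc 1 n, StronglyMeasurable[ℱ t] (X t))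
    (hbdd : ∀ t ∈ Icc 1 n, ∀ᵐ ω ∂P, |X t ω| ≤ c)
    (hcond : ∀ t ∈ Icc 1 n, P[X t|ℱ (t - 1)] =ᵐ[P] 0) :
    HasSubgaussianMGF (fun ω => ∑ t ∈ Icc 1 n, X t ω) (n * c ^ 2) P := by
  induction n with
  | zero => simp
  | succ n ih =>
    have hlast : n + 1 ∈ Icc 1 (n + 1) := by simp
    have hsub : Icc 1 n ⊆ Icc 1 (n + 1) := Icc_subset_Icc_right n.le_succ
    simp_rw [sum_Icc_succ_top (Nat.le_add_left 1 n)]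
    rw [Nat.cast_succ, add_one_mul]
    refine (ih (fun t ht => hmeas t (hsub ht)) (fun t ht => hbdd t (hsub ht))
      (fun t ht => hcond t (hsub ht))).add_of_condExp_eq_zero (ℱ.le n) ?_
      ((hmeas _ hlast).mono (ℱ.le _)).aestronglyMeasurable (hbdd _ hlast) (hcond _ hlast)
    exact Finset.stronglyMeasurable_fun_sum _ fun t ht =>
      (hmeas t (hsub ht)).mono (ℱ.mono (mem_Icc.1 ht).2)

lemma HasSubgaussianMGF.one_sub_le_measureReal_abs_le {X : Ω → ℝ} {c : ℝ≥0}
    (h : HasSubgaussianMGF X c P) {ε : ℝ} (hε : 0 ≤ ε) :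
    1 - 2 * exp (-ε ^ 2 / (2 * c)) ≤ P.real {ω | |X ω| ≤ ε} := by
  have hcover : Set.univ ⊆ {ω | |X ω| ≤ ε} ∪ ({ω | ε ≤ X ω} ∪ {ω | ε ≤ (-X) ω}) := by
    intro ω _
    simp only [Set.mem_union, Set.mem_ofPred_eq, Pi.neg_apply, abs_le]
    by_contra! h
    linarith [h.1 (by linarith), h.2.1, h.2.2]
  have hright := h.measure_ge_le hε
  have hleft := h.neg.measure_ge_le hε
  have hunion := (measureReal_union_le (μ := P) {ω | |X ω| ≤ ε} _).trans
    (add_le_add le_rfl (measureReal_union_le {ω | ε ≤ X ω} {ω | ε ≤ (-X) ω}))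
  have huniv := measureReal_mono (μ := P) hcover
  rw [probReal_univ] at huniv
  linarith

lemma condExp_sub_condExp_ae_eq_zero (hm : m ≤ m0) {Y : Ω → ℝ} (hY : Integrable Y P) :
    P[Y - P[Y|m]|m] =ᵐ[P] 0 := by
  filter_upwards [condExp_sub hY integrable_condExp m] with ω h
  rw [h, condExp_of_stronglyMeasurable hm stronglyMeasurable_condExp integrable_condExp]
  simp

lemma hasSubgaussianMGF_sum_Icc_sub_condExp (ℱ : Filtration ℕ m0) {Y : ℕ → Ω → ℝ} {b : ℝ≥0}
    {n : ℕ} (hmeas : ∀ t ∈ Icc 1 n, StronglyMeasurable[ℱ t] (Y t))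
    (hbdd : ∀ t ∈ Icc 1 n, ∀ᵐ ω ∂P, |Y t ω| ≤ b) :
    HasSubgaussianMGF (fun ω => ∑ t ∈ Icc 1 n, (Y t - P[Y t|ℱ (t - 1)]) ω) (n * (2 * b) ^ 2) P := by
  refine hasSubgaussianMGF_sum_Icc_of_condExp_eq_zero ℱ (fun t ht => ?_) (fun t ht => ?_)
    (fun t ht => condExp_sub_condExp_ae_eq_zero (ℱ.le _) ?_)
  · exact (hmeas t ht).sub (stronglyMeasurable_condExp.mono (ℱ.mono (Nat.sub_le t 1)))
  · filter_upwards [hbdd t ht, ae_bdd_abs_condExp_of_ae_bdd_abs (m := ℱ (t - 1)) (hbdd t ht)]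
      with ω h1 h2
    calc |(Y t - P[Y t|ℱ (t - 1)]) ω| ≤ |Y t ω| + |P[Y t|ℱ (t - 1)] ω| := abs_sub _ _
      _ ≤ ↑(2 * b) := by push_cast; linarith
  · exact .of_bound ((hmeas t ht).mono (ℱ.le t)).aestronglyMeasurable b
      (by simpa only [norm_eq_abs] using hbdd t ht)

theorem ofReal_one_sub_le_measure_abs_sum_sub_sum_le (ℱ : Filtration ℕ m0) {Y y : ℕ → Ω → ℝ}
    {b : ℝ≥0} (hb : 0 < b) {T : ℕ} (hmeas : ∀ t ∈ Icc 1 T, StronglyMeasurable[ℱ t] (Y t))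
    (hbdd : ∀ t ∈ Icc 1 T, ∀ᵐ ω ∂P, |Y t ω| ≤ b)
    (hcond : ∀ t ∈ Icc 1 T, P[Y t|ℱ (t - 1)] =ᵐ[P] y t) {δ : ℝ} (hδ0 : 0 < δ) (hδ1 : δ ≤ 1) :
    ENNReal.ofReal (1 - δ) ≤
      P {ω | |∑ t ∈ Icc 1 T, Y t ω - ∑ t ∈ Icc 1 T, y t ω| ≤ b * √(8 * T * log (2 / δ))} := by
  obtain rfl | hT := T.eq_zero_or_pos
  · simp [hδ0.le]
  have hsum : ∀ᵐ ω ∂P, ∑ t ∈ Icc 1 T, (Y t - P[Y t|ℱ (t - 1)]) ω =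
      ∑ t ∈ Icc 1 T, Y t ω - ∑ t ∈ Icc 1 T, y t ω := by
    filter_upwards [(Filter.eventually_all_finset _).2 hcond] with ω hω
    rw [← sum_sub_distrib]
    exact sum_congr rfl fun t ht => by rw [Pi.sub_apply, hω t ht]
  have htail : exp (-(b * √(8 * T * log (2 / δ))) ^ 2 / (2 * ((T * (2 * b) ^ 2 : ℝ≥0) : ℝ)))
      = δ / 2 := by
    have hlog : 0 ≤ log (2 / δ) := log_nonneg (by rw [le_div_iff₀ hδ0]; linarith)
    have hT' : (0 : ℝ) < T := Nat.cast_pos.2 hT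
    have hb' : (0 : ℝ) < b := hb
    rw [mul_pow, sq_sqrt (by positivity), show -(b ^ 2 * (8 * T * log (2 / δ))) /
      (2 * ((T * (2 * b) ^ 2 : ℝ≥0) : ℝ)) = -log (2 / δ) by push_cast; field_simp; ring,
      exp_neg, exp_log (by positivity), inv_div]
  have hprob := (hasSubgaussianMGF_sum_Icc_sub_condExp ℱ hmeas hbdd).one_sub_le_measureReal_abs_le
    (ε := b * √(8 * T * log (2 / δ))) (by positivity)
  rw [htail] at hprob
  calc ENNReal.ofReal (1 - δ)
      ≤ P {ω | |∑ t ∈ Icc 1 T, (Y t - P[Y t|ℱ (t - 1)]) ω| ≤ b * √(8 * T * log (2 / δ))} := by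
        rw [← ofReal_measureReal]; exact ENNReal.ofReal_le_ofReal (by linarith)
    _ = _ := measure_congr <| Filter.eventuallyEq_set.2 <| hsum.mono fun ω h => by
        simp only [Set.mem_ofPred_eq, h]

end ProbabilityTheory

theorem contextual_linear_regret_coupling_general
    (d : ℕ) (Θ : Set (EuclideanSpace ℝ (Fin d)))
    (hΘball : ∀ θ ∈ Θ, ‖θ‖ ≤ 1)
    {Ω : Type*} [m0 : MeasurableSpace Ω] (P : Measure Ω)
    [IsProbabilityMeasure P]
    (g : EuclideanSpace ℝ (Fin d) → EuclideanSpace ℝ (Fin d))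
    (T : ℕ) (ℱ : Filtration ℕ m0)
    (θstar : EuclideanSpace ℝ (Fin d)) (hθstar : θstar ∈ Θ)
    (α β : ℕ → Ω → EuclideanSpace ℝ (Fin d))
    (θt : ℕ → Ω → EuclideanSpace ℝ (Fin d))
    (hα_meas : ∀ t ∈ Finset.Icc 1 T, StronglyMeasurable[ℱ t] (α t))
    (hβ_meas : ∀ t ∈ Finset.Icc 1 T, StronglyMeasurable[ℱ t] (β t))
    (hα_bdd : ∀ t ∈ Finset.Icc 1 T, ∀ᵐ ω ∂P, ‖α t ω‖ ≤ 1)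
    (hβ_bdd : ∀ t ∈ Finset.Icc 1 T, ∀ᵐ ω ∂P, ‖β t ω‖ ≤ 1)
    (hcondα : ∀ t ∈ Finset.Icc 1 T,
      P[fun ω => ⟪α t ω, θstar⟫ | ℱ (t - 1)] =ᵐ[P] fun ω => ⟪g (θt t ω), θstar⟫)
    (hcondβ : ∀ t ∈ Finset.Icc 1 T,
      P[fun ω => ⟪β t ω, θstar⟫ | ℱ (t - 1)] =ᵐ[P] fun _ => ⟪g θstar, θstar⟫) :
    ∀ δ : ℝ, 0 < δ → δ < 1 →
      ENNReal.ofReal (1 - δ) ≤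
        P {ω | |(∑ t ∈ Finset.Icc 1 T, ⟪β t ω - α t ω, θstar⟫) -
                ∑ t ∈ Finset.Icc 1 T, ⟪g θstar - g (θt t ω), θstar⟫|
              ≤ 2 * Real.sqrt (8 * T * Real.log (4 / δ))} := by
  intro δ hδ0 hδ1
  have hθstar_norm : ‖θstar‖ ≤ 1 := hΘball θstar hθstar
  have hY_cond : ∀ t ∈ Icc 1 T, P[fun ω => ⟪β t ω - α t ω, θstar⟫|ℱ (t - 1)]
      =ᵐ[P] fun ω => ⟪g θstar - g (θt t ω), θstar⟫ := fun t ht => by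
    have hα_int : Integrable (α t) P :=
      .of_bound ((hα_meas t ht).mono (ℱ.le t)).aestronglyMeasurable 1 (hα_bdd t ht)
    have hβ_int : Integrable (β t) P :=
      .of_bound ((hβ_meas t ht).mono (ℱ.le t)).aestronglyMeasurable 1 (hβ_bdd t ht)
    filter_upwards [condExp_inner_sub_ae_eq (ℱ (t - 1)) hα_int hβ_int θstar,
      hcondα t ht, hcondβ t ht] with ω h hα hβ
    rw [h, Pi.sub_apply, hα, hβ, inner_sub_left]
  have hprob := ofReal_one_sub_le_measure_abs_sum_sub_sum_le ℱ (b := 2) two_pos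
    (fun t ht => ((hβ_meas t ht).sub (hα_meas t ht)).inner stronglyMeasurable_const)
    (fun t ht => by
      filter_upwards [hα_bdd t ht, hβ_bdd t ht] with ω hα hβ
      exact_mod_cast abs_inner_sub_le_two hα hβ hθstar_norm)
    hY_cond (half_pos hδ0) (by linarith)
  rw [show (2 : ℝ) / (δ / 2) = 4 / δ by field_simp; norm_num] at hprob
  exact (ENNReal.ofReal_le_ofReal (by linarith)).trans hprob

/-- probabilistic core of Theorem 1: with probability at least 1 − δ,
the regret of the contextual algorithm and the regret of the simulated linear bandit
algorithm differ by at most 2√(8 T log(4/δ)). -/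
theorem contextual_linear_regret_coupling
    (d : ℕ) (Θ : Set (EuclideanSpace ℝ (Fin d))) (hΘ : Θ.Nonempty)
    (hΘball : ∀ θ ∈ Θ, ‖θ‖ ≤ 1)
    {Ω : Type*} [m0 : MeasurableSpace Ω] (μ P : Measure Ω)
    [IsProbabilityMeasure μ] [IsProbabilityMeasure P]
    (f : Ω → EuclideanSpace ℝ (Fin d) → EuclideanSpace ℝ (Fin d))
    (hmeas : ∀ θ ∈ Θ, Measurable (fun ω => f ω θ))
    (hint : ∀ θ ∈ Θ, Integrable (fun ω => f ω θ) μ)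
    (hbdd : ∀ ω : Ω, ∀ θ ∈ Θ, ‖f ω θ‖ ≤ 1)
    (hmax : ∀ ω : Ω, ∀ θ ∈ Θ, ∀ θ' ∈ Θ, ⟪f ω θ, θ'⟫ ≤ ⟪f ω θ', θ'⟫)
    (g : EuclideanSpace ℝ (Fin d) → EuclideanSpace ℝ (Fin d))
    (hg : ∀ θ ∈ Θ, g θ = ∫ ω, f ω θ ∂μ)
    (T : ℕ) (ℱ : Filtration ℕ m0)
    (θstar : EuclideanSpace ℝ (Fin d)) (hθstar : θstar ∈ Θ)
    (α β : ℕ → Ω → EuclideanSpace ℝ (Fin d))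
    (θt : ℕ → Ω → EuclideanSpace ℝ (Fin d))
    (hα_meas : ∀ t ∈ Finset.Icc 1 T, StronglyMeasurable[ℱ t] (α t))
    (hβ_meas : ∀ t ∈ Finset.Icc 1 T, StronglyMeasurable[ℱ t] (β t))
    (hα_bdd : ∀ t ∈ Finset.Icc 1 T, ∀ᵐ ω ∂P, ‖α t ω‖ ≤ 1)
    (hβ_bdd : ∀ t ∈ Finset.Icc 1 T, ∀ᵐ ω ∂P, ‖β t ω‖ ≤ 1)
    (hθt_meas : ∀ t ∈ Finset.Icc 1 T, StronglyMeasurable[ℱ (t - 1)] (θt t))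
    (hθt_mem : ∀ t ∈ Finset.Icc 1 T, ∀ ω : Ω, θt t ω ∈ Θ)
    (hcondα : ∀ t ∈ Finset.Icc 1 T,
      P[fun ω => ⟪α t ω, θstar⟫ | ℱ (t - 1)] =ᵐ[P] fun ω => ⟪g (θt t ω), θstar⟫)
    (hcondβ : ∀ t ∈ Finset.Icc 1 T,
      P[fun ω => ⟪β t ω, θstar⟫ | ℱ (t - 1)] =ᵐ[P] fun _ => ⟪g θstar, θstar⟫) :
    ∀ δ : ℝ, 0 < δ → δ < 1 →
      ENNReal.ofReal (1 - δ) ≤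
        P {ω | |(∑ t ∈ Finset.Icc 1 T, ⟪β t ω - α t ω, θstar⟫) -
                ∑ t ∈ Finset.Icc 1 T, ⟪g θstar - g (θt t ω), θstar⟫|
              ≤ 2 * Real.sqrt (8 * T * Real.log (4 / δ))} :=
  contextual_linear_regret_coupling_general d Θ hΘball (m0 := m0) P g T ℱ θstar hθstar α β θt
    hα_meas hβ_meas hα_bdd hβ_bdd hcondα hcondβ
end

section
/- (Proposition 2, uniform accuracy of the empirical estimate of g.) Let T ≥ 1, let Θ' ⊆ Θ be a finite (1/T)-net of Θ, let n ≥ 1, let ω_1, …, ω_n be i.i.d. Ω-valued random elements with law μ, and define the empirical estimate g_n(θ) = (1/n) Σ_{i=1}^n f(ω_i, θ) for θ ∈ Θ'. Then for every δ ∈ (0,1), with probability at least 1 − δ, simultaneously for all θ ∈ Θ' and all θ' ∈ Θ: |⟨g(θ) − g_n(θ), θ'⟩| ≤ 2√( log(2|Θ'|²/δ) / n ) + 2/T. -/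
/-!
For a fixed pair `(θ, φ)` of net points the numbers `⟪f (X i) θ, φ⟫` are i.i.d., lie in `[-1, 1]`
and have mean `⟪g θ, φ⟫`, so by Hoeffding's inequality the empirical mean is `ε`-far from it with
probability at most `2 exp (-n ε² / 2)`; for the chosen `ε` the union bound over the `|Θ'|²`
pairs is at most `δ`. Outside this event, any `θ' ∈ Θ` is `1/T`-close to some `φ ∈ Θ'`, and since
`‖g θ - g_n θ‖ ≤ 2` replacing `θ'` by `φ` costs at most `2/T`.
-/

open MeasureTheory
open scoped RealInnerProductSpace

open Real ProbabilityTheory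

section InnerProduct

variable {E : Type*} [NormedAddCommGroup E] [InnerProductSpace ℝ E]

lemma abs_inner_le_abs_inner_add_norm_mul_norm_sub (v x y : E) :
    |⟪v, x⟫| ≤ |⟪v, y⟫| + ‖v‖ * ‖x - y‖ :=
  calc |⟪v, x⟫| = |⟪v, y⟫ + ⟪v, x - y⟫| := by rw [inner_sub_right, add_sub_cancel]
    _ ≤ |⟪v, y⟫| + |⟪v, x - y⟫| := abs_add_le _ _
    _ ≤ |⟪v, y⟫| + ‖v‖ * ‖x - y‖ := by gcongr; exact abs_real_inner_le_norm _ _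

lemma norm_inv_natCast_smul_sum_le_one {n : ℕ} (v : Fin n → E) (hv : ∀ i, ‖v i‖ ≤ 1) :
    ‖(n : ℝ)⁻¹ • ∑ i, v i‖ ≤ 1 := by
  rcases Nat.eq_zero_or_pos n with rfl | hn
  · simp
  calc ‖(n : ℝ)⁻¹ • ∑ i, v i‖ ≤ (n : ℝ)⁻¹ * ∑ i : Fin n, (1 : ℝ) := by
        rw [norm_smul, norm_inv, RCLike.norm_natCast]
        gcongr
        exact (norm_sum_le _ _).trans (Finset.sum_le_sum fun i _ ↦ hv i)
    _ = 1 := by simp [hn.ne']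

lemma norm_integral_sub_inv_natCast_smul_sum_le_two [CompleteSpace E] {Ω : Type*}
    [MeasurableSpace Ω] {μ : Measure Ω} [IsProbabilityMeasure μ] {F : Ω → E}
    (hFb : ∀ ω, ‖F ω‖ ≤ 1) {n : ℕ} (x : Fin n → Ω) :
    ‖∫ ω, F ω ∂μ - (n : ℝ)⁻¹ • ∑ i, F (x i)‖ ≤ 2 := by
  have hint : ‖∫ ω, F ω ∂μ‖ ≤ 1 := by
    simpa using norm_integral_le_of_norm_le_const (μ := μ) (.of_forall hFb)
  have havg := norm_inv_natCast_smul_sum_le_one _ fun i ↦ hFb (x i)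
  linarith [norm_sub_le (∫ ω, F ω ∂μ) ((n : ℝ)⁻¹ • ∑ i, F (x i))]

end InnerProduct

lemma le_mul_two_mul_sqrt_div_sq_div_two (L : ℝ) {n : ℝ} (hn : 0 < n) :
    L ≤ n * (2 * √(L / n)) ^ 2 / 2 := by
  rcases le_or_gt L 0 with hL | hL
  · exact hL.trans (by positivity)
  rw [mul_pow, sq_sqrt (by positivity)]
  field_simp
  linarith

lemma mul_exp_neg_log_div_le {a δ : ℝ} (ha : 0 ≤ a) (hδ : 0 < δ) :
    a * exp (-log (a / δ)) ≤ δ := by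
  rcases ha.eq_or_lt with rfl | ha
  · simp [hδ.le]
  rw [exp_neg, exp_log (by positivity), inv_div, mul_div_cancel₀ δ ha.ne']

lemma two_mul_sq_mul_exp_le (K : ℝ) {n δ : ℝ} (hn : 0 < n) (hδ : 0 < δ) :
    2 * K ^ 2 * exp (-(n * (2 * √(log (2 * K ^ 2 / δ) / n)) ^ 2 / 2)) ≤ δ :=
  calc _ ≤ 2 * K ^ 2 * exp (-log (2 * K ^ 2 / δ)) := by
        gcongr
        exact le_mul_two_mul_sqrt_div_sq_div_two _ hn
    _ ≤ δ := mul_exp_neg_log_div_le (by positivity) hδ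

lemma ofReal_one_sub_le_of_measureReal_compl_le {α : Type*} [MeasurableSpace α]
    {P : Measure α} [IsProbabilityMeasure P] {s : Set α} {δ : ℝ} (h : P.real sᶜ ≤ δ) :
    ENNReal.ofReal (1 - δ) ≤ P s := by
  have hcover : 1 ≤ P.real s + P.real sᶜ := by
    simpa using measureReal_union_le (μ := P) s sᶜ
  rw [← ofReal_measureReal]
  exact ENNReal.ofReal_le_ofReal (by linarith)

section Hoeffding

variable {Ω Ω' : Type*} [MeasurableSpace Ω] [MeasurableSpace Ω']
  {μ : Measure Ω} [IsProbabilityMeasure μ] {P : Measure Ω'}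
  {n : ℕ} {X : Fin n → Ω' → Ω}

lemma measureReal_sum_sub_integral_ge_le (hX_meas : ∀ i, Measurable (X i))
    (hX_indep : iIndepFun X P) (hX_law : ∀ i, P.map (X i) = μ) {Z : Ω → ℝ}
    (hZm : Measurable Z) (hZb : ∀ᵐ ω ∂μ, |Z ω| ≤ 1) {ε : ℝ} (hε : 0 ≤ ε) :
    P.real {ω' | ε ≤ ∑ i, (Z (X i ω') - μ[Z])} ≤ exp (-ε ^ 2 / (2 * n)) := by
  have hsubG : ∀ i ∈ Finset.univ,
      HasSubgaussianMGF (fun ω' ↦ Z (X i ω') - μ[Z]) 1 P := by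
    intro i _
    -- Hoeffding's lemma on `[-1, 1]`: variance proxy `((1 - (-1)) / 2) ^ 2 = 1`.
    have h := hasSubgaussianMGF_of_mem_Icc (a := -1) (b := 1) hZm.aemeasurable
      (hZb.mono fun ω hω ↦ abs_le.mp hω)
    norm_num at h
    exact HasSubgaussianMGF.of_map (hX_meas i).aemeasurable (by rwa [hX_law i])
  simpa using HasSubgaussianMGF.measure_sum_ge_le_of_iIndepFun
    (hX_indep.comp (fun _ ω ↦ Z ω - μ[Z]) fun _ ↦ hZm.sub_const _) hsubG hε

lemma measureReal_abs_sum_sub_integral_ge_le [IsFiniteMeasure P] (hX_meas : ∀ i, Measurable (X i))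
    (hX_indep : iIndepFun X P) (hX_law : ∀ i, P.map (X i) = μ) {Z : Ω → ℝ}
    (hZm : Measurable Z) (hZb : ∀ᵐ ω ∂μ, |Z ω| ≤ 1) {ε : ℝ} (hε : 0 ≤ ε) :
    P.real {ω' | ε ≤ |∑ i, (Z (X i ω') - μ[Z])|} ≤ 2 * exp (-ε ^ 2 / (2 * n)) := by
  have hupper := measureReal_sum_sub_integral_ge_le hX_meas hX_indep hX_law hZm hZb hε
  have hlower := measureReal_sum_sub_integral_ge_le hX_meas hX_indep hX_law hZm.neg
    (by simpa only [Pi.neg_apply, abs_neg] using hZb) hε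
  have hsplit : {ω' | ε ≤ |∑ i, (Z (X i ω') - μ[Z])|} ⊆
      {ω' | ε ≤ ∑ i, (Z (X i ω') - μ[Z])} ∪ {ω' | ε ≤ ∑ i, ((-Z) (X i ω') - μ[-Z])} := by
    intro ω' hω'
    simp only [Pi.neg_apply, integral_neg, neg_sub_neg, Set.mem_union, Set.mem_ofPred_eq,
      Finset.sum_sub_distrib] at hω' ⊢
    rcases le_abs'.mp hω' with h | h <;> [right; left] <;> linarith
  calc _ ≤ _ := measureReal_mono hsplit
    _ ≤ _ := measureReal_union_le _ _
    _ ≤ _ := by linarith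

variable {E : Type*} [NormedAddCommGroup E] [InnerProductSpace ℝ E] [CompleteSpace E]
  [MeasurableSpace E] [BorelSpace E] [SecondCountableTopology E]

lemma measureReal_lt_abs_inner_integral_sub_average_le [IsFiniteMeasure P]
    (hX_meas : ∀ i, Measurable (X i)) (hX_indep : iIndepFun X P)
    (hX_law : ∀ i, P.map (X i) = μ) {F : Ω → E} (hFm : Measurable F) (hFb : ∀ ω, ‖F ω‖ ≤ 1)
    {v : E} (hv : ‖v‖ ≤ 1) (hn : n ≠ 0) {ε : ℝ} (hε : 0 ≤ ε) :
    P.real {ω' | ε < |⟪∫ ω, F ω ∂μ - (n : ℝ)⁻¹ • ∑ i, F (X i ω'), v⟫|}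
      ≤ 2 * exp (-(n * ε ^ 2 / 2)) := by
  set Z : Ω → ℝ := fun ω ↦ ⟪F ω, v⟫
  have hZb : ∀ᵐ ω ∂μ, |Z ω| ≤ 1 := .of_forall fun ω ↦
    (abs_real_inner_le_norm _ _).trans (mul_le_one₀ (hFb ω) (norm_nonneg v) hv)
  have hmean : μ[Z] = ⟪∫ ω, F ω ∂μ, v⟫ := by
    have hFi : Integrable F μ := .of_bound hFm.aestronglyMeasurable 1 (.of_forall hFb)
    simp only [Z, real_inner_comm v]
    exact integral_inner hFi v
  have hnpos : (0 : ℝ) < n := by positivity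
  have hsub : {ω' | ε < |⟪∫ ω, F ω ∂μ - (n : ℝ)⁻¹ • ∑ i, F (X i ω'), v⟫|} ⊆
      {ω' | n * ε ≤ |∑ i, (Z (X i ω') - μ[Z])|} := by
    intro ω' hω'
    have hid : ⟪∫ ω, F ω ∂μ - (n : ℝ)⁻¹ • ∑ i, F (X i ω'), v⟫
        = -((n : ℝ)⁻¹ * ∑ i, (Z (X i ω') - μ[Z])) := by
      simp only [inner_sub_left, real_inner_smul_left, sum_inner, Finset.sum_sub_distrib,
        Finset.sum_const, Finset.card_univ, Fintype.card_fin, nsmul_eq_mul, hmean, Z]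
      field_simp
      ring
    simp only [Set.mem_ofPred_eq, hid, abs_neg, abs_mul, abs_inv, Nat.abs_cast] at hω' ⊢
    rw [inv_mul_eq_div, lt_div_iff₀ hnpos] at hω'
    linarith
  calc _ ≤ _ := measureReal_mono hsub
    _ ≤ _ := measureReal_abs_sum_sub_integral_ge_le hX_meas hX_indep hX_law
        hFm.inner_const hZb (by positivity)
    _ = _ := by field_simp

lemma measureReal_exists_lt_abs_inner_integral_sub_average_le [IsFiniteMeasure P]
    (hX_meas : ∀ i, Measurable (X i)) (hX_indep : iIndepFun X P)
    (hX_law : ∀ i, P.map (X i) = μ) {F : Ω → E → E} {S : Finset E}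
    (hFm : ∀ θ ∈ S, Measurable (F · θ)) (hFb : ∀ ω, ∀ θ ∈ S, ‖F ω θ‖ ≤ 1)
    (hS : ∀ φ ∈ S, ‖φ‖ ≤ 1) (hn : n ≠ 0) {ε : ℝ} (hε : 0 ≤ ε) :
    P.real {ω' | ∃ θ ∈ S, ∃ φ ∈ S, ε < |⟪∫ ω, F ω θ ∂μ - (n : ℝ)⁻¹ • ∑ i, F (X i ω') θ, φ⟫|}
      ≤ 2 * S.card ^ 2 * exp (-(n * ε ^ 2 / 2)) := by
  set bad : E × E → Set Ω' :=
    fun p ↦ {ω' | ε < |⟪∫ ω, F ω p.1 ∂μ - (n : ℝ)⁻¹ • ∑ i, F (X i ω') p.1, p.2⟫|}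
  have hcover : {ω' | ∃ θ ∈ S, ∃ φ ∈ S,
      ε < |⟪∫ ω, F ω θ ∂μ - (n : ℝ)⁻¹ • ∑ i, F (X i ω') θ, φ⟫|} ⊆ ⋃ p ∈ S ×ˢ S, bad p := by
    rintro ω' ⟨θ, hθ, φ, hφ, h⟩
    exact Set.mem_biUnion (Finset.mk_mem_product hθ hφ) h
  have hpair : ∀ p ∈ S ×ˢ S, P.real (bad p) ≤ 2 * exp (-(n * ε ^ 2 / 2)) := by
    intro p hp
    obtain ⟨hθ, hφ⟩ := Finset.mem_product.mp hp
    exact measureReal_lt_abs_inner_integral_sub_average_le hX_meas hX_indep hX_law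
      (hFm _ hθ) (fun ω ↦ hFb ω _ hθ) (hS _ hφ) hn hε
  calc _ ≤ P.real (⋃ p ∈ S ×ˢ S, bad p) := measureReal_mono hcover (measure_ne_top P _)
    _ ≤ ∑ p ∈ S ×ˢ S, P.real (bad p) := measureReal_biUnion_finset_le _ _
    _ ≤ ∑ _p ∈ S ×ˢ S, 2 * exp (-(n * ε ^ 2 / 2)) := Finset.sum_le_sum hpair
    _ = 2 * S.card ^ 2 * exp (-(n * ε ^ 2 / 2)) := by
      rw [Finset.sum_const, Finset.card_product, nsmul_eq_mul]; push_cast; ring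

end Hoeffding

theorem empirical_g_uniform_accuracy_general
    (d : ℕ) (Θ : Set (EuclideanSpace ℝ (Fin d)))
    (hΘball : ∀ θ ∈ Θ, ‖θ‖ ≤ 1)
    {Ω : Type*} [mΩ : MeasurableSpace Ω] (μ : Measure Ω) [IsProbabilityMeasure μ]
    (f : Ω → EuclideanSpace ℝ (Fin d) → EuclideanSpace ℝ (Fin d))
    (hmeas : ∀ θ ∈ Θ, Measurable (fun ω => f ω θ))
    (hbdd : ∀ ω : Ω, ∀ θ ∈ Θ, ‖f ω θ‖ ≤ 1)
    (g : EuclideanSpace ℝ (Fin d) → EuclideanSpace ℝ (Fin d))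
    (hg : ∀ θ ∈ Θ, g θ = ∫ ω, f ω θ ∂μ)
    (T : ℝ)
    (Θ' : Finset (EuclideanSpace ℝ (Fin d))) (hsub : ↑Θ' ⊆ Θ)
    (hnet : ∀ θ ∈ Θ, ∃ φ ∈ Θ', ‖θ - φ‖ ≤ 1 / T)
    (n : ℕ) (hn : 1 ≤ n)
    {Ω' : Type*} [mΩ' : MeasurableSpace Ω'] (P : Measure Ω') [IsProbabilityMeasure P]
    (X : Fin n → Ω' → Ω)
    (hX_meas : ∀ i, Measurable (X i))
    (hX_indep : ProbabilityTheory.iIndepFun (m := fun _ => mΩ) X P)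
    (hX_law : ∀ i, P.map (X i) = μ) :
    ∀ δ : ℝ, 0 < δ → δ < 1 →
      ENNReal.ofReal (1 - δ) ≤
        P {ω' | ∀ θ ∈ Θ', ∀ θ' ∈ Θ,
          |⟪g θ - (n : ℝ)⁻¹ • ∑ i : Fin n, f (X i ω') θ, θ'⟫|
            ≤ 2 * Real.sqrt (Real.log (2 * (Θ'.card : ℝ) ^ 2 / δ) / n) + 2 / T} := by
  intro δ hδ _
  set ε := 2 * √(log (2 * (Θ'.card : ℝ) ^ 2 / δ) / n)
  have hbad := measureReal_exists_lt_abs_inner_integral_sub_average_le hX_meas hX_indep hX_law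
    (fun θ hθ ↦ hmeas θ (hsub hθ)) (fun ω θ hθ ↦ hbdd ω θ (hsub hθ))
    (fun φ hφ ↦ hΘball φ (hsub hφ)) (by omega) (by positivity : 0 ≤ ε)
  refine ofReal_one_sub_le_of_measureReal_compl_le ((measureReal_mono (Set.compl_subset_comm.mp ?_)
    (measure_ne_top P _)).trans (hbad.trans (two_mul_sq_mul_exp_le _ (by positivity) hδ)))
  intro ω' hω' θ hθ θ' hθ'
  obtain ⟨φ, hφ, hθ'φ⟩ := hnet θ' hθ'
  have hnear : |⟪g θ - (n : ℝ)⁻¹ • ∑ i, f (X i ω') θ, φ⟫| ≤ ε := by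
    rw [hg θ (hsub hθ)]
    exact not_lt.mp fun h ↦ hω' ⟨θ, hθ, φ, hφ, h⟩
  have hdev : ‖g θ - (n : ℝ)⁻¹ • ∑ i, f (X i ω') θ‖ ≤ 2 := by
    rw [hg θ (hsub hθ)]
    exact norm_integral_sub_inv_natCast_smul_sum_le_two (fun ω ↦ hbdd ω θ (hsub hθ)) _
  calc _ ≤ |⟪g θ - (n : ℝ)⁻¹ • ∑ i, f (X i ω') θ, φ⟫|
        + ‖g θ - (n : ℝ)⁻¹ • ∑ i, f (X i ω') θ‖ * ‖θ' - φ‖ :=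
        abs_inner_le_abs_inner_add_norm_mul_norm_sub _ _ _
    _ ≤ ε + 2 * (1 / T) := by gcongr
    _ = ε + 2 / T := by ring

/-- Proposition 2: uniform accuracy of the empirical estimate
g_n(θ) = (1/n) Σ_{i=1}^n f(ω_i, θ) of g over a finite (1/T)-net Θ' ⊆ Θ: with probability
at least 1 − δ, for all θ ∈ Θ' and θ' ∈ Θ,
|⟨g(θ) − g_n(θ), θ'⟩| ≤ 2√(log(2|Θ'|²/δ)/n) + 2/T. -/
theorem empirical_g_uniform_accuracy
    (d : ℕ) (Θ : Set (EuclideanSpace ℝ (Fin d))) (hΘ : Θ.Nonempty)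
    (hΘball : ∀ θ ∈ Θ, ‖θ‖ ≤ 1)
    {Ω : Type*} [mΩ : MeasurableSpace Ω] (μ : Measure Ω) [IsProbabilityMeasure μ]
    (f : Ω → EuclideanSpace ℝ (Fin d) → EuclideanSpace ℝ (Fin d))
    (hmeas : ∀ θ ∈ Θ, Measurable (fun ω => f ω θ))
    (hint : ∀ θ ∈ Θ, Integrable (fun ω => f ω θ) μ)
    (hbdd : ∀ ω : Ω, ∀ θ ∈ Θ, ‖f ω θ‖ ≤ 1)
    (hmax : ∀ ω : Ω, ∀ θ ∈ Θ, ∀ θ' ∈ Θ, ⟪f ω θ, θ'⟫ ≤ ⟪f ω θ', θ'⟫)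
    (g : EuclideanSpace ℝ (Fin d) → EuclideanSpace ℝ (Fin d))
    (hg : ∀ θ ∈ Θ, g θ = ∫ ω, f ω θ ∂μ)
    (T : ℝ) (hT : 1 ≤ T)
    (Θ' : Finset (EuclideanSpace ℝ (Fin d))) (hsub : ↑Θ' ⊆ Θ)
    (hnet : ∀ θ ∈ Θ, ∃ φ ∈ Θ', ‖θ - φ‖ ≤ 1 / T)
    (n : ℕ) (hn : 1 ≤ n)
    {Ω' : Type*} [mΩ' : MeasurableSpace Ω'] (P : Measure Ω') [IsProbabilityMeasure P]
    (X : Fin n → Ω' → Ω)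
    (hX_meas : ∀ i, Measurable (X i))
    (hX_indep : ProbabilityTheory.iIndepFun (m := fun _ => mΩ) X P)
    (hX_law : ∀ i, P.map (X i) = μ) :
    ∀ δ : ℝ, 0 < δ → δ < 1 →
      ENNReal.ofReal (1 - δ) ≤
        P {ω' | ∀ θ ∈ Θ', ∀ θ' ∈ Θ,
          |⟪g θ - (n : ℝ)⁻¹ • ∑ i : Fin n, f (X i ω') θ, θ'⟫|
            ≤ 2 * Real.sqrt (Real.log (2 * (Θ'.card : ℝ) ^ 2 / δ) / n) + 2 / T} :=
  empirical_g_uniform_accuracy_general d Θ hΘball (mΩ := mΩ) μ f hmeas hbdd g hg T Θ' hsub hnet n hn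
    (mΩ' := mΩ') P X hX_meas hX_indep hX_law
end

section
/- (Inner-product identity of Theorem 3.) Define μ_i = ∫_Ω M_i(ω) dμ(ω) and ν_i = ∫_Ω m_i(ω) dμ(ω) for i ∈ {1, …, d}. For θ ∈ Θ define a'(θ) ∈ {0,1}^{2d} by a'(θ)_{2i−1} = 1 if θ_i ≥ 0 and 0 otherwise, and a'(θ)_{2i} = 1 − a'(θ)_{2i−1}; and for θ⋆ ∈ ℝ^d define θ'⋆ ∈ ℝ^{2d} by θ'⋆_{2i−1} = μ_i · (θ⋆)_i and θ'⋆_{2i} = ν_i · (θ⋆)_i. Then for every θ ∈ Θ all of whose coordinates are nonzero and every θ⋆ ∈ ℝ^d: ⟨g(θ), θ⋆⟩ = ⟨a'(θ), θ'⋆⟩. In particular, a'(θ) lies in the fixed action set 𝒳 = {a' ∈ {0,1}^{2d} : a'_{2i−1} + a'_{2i} = 1 for all i}, which does not depend on the context distribution. -/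
open MeasureTheory
open scoped RealInnerProductSpace

/-!
Integrating the coordinate-wise maximizer coordinate by coordinate gives
`g(θ)_i = μ_i` or `ν_i` according to the sign of `θ_i`. Hence `⟨g(θ), θ⋆⟩` is a sum over `i`
of `μ_i θ⋆_i` or `ν_i θ⋆_i`, and `a'(θ)` is exactly the 0/1 vector selecting the right summand of
`θ'⋆_{2i-1} + θ'⋆_{2i} = μ_i θ⋆_i + ν_i θ⋆_i`.
-/

lemma real_inner_eq_sum_fin_two {ι : Type*} [Fintype ι]
    (x y : EuclideanSpace ℝ (ι × Fin 2)) :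
    ⟪x, y⟫ = ∑ i, (x (i, 0) * y (i, 0) + x (i, 1) * y (i, 1)) := by
  simp only [PiLp.inner_apply, RCLike.inner_apply, conj_trivial, Fintype.sum_prod_type,
    Fin.sum_univ_two, mul_comm (y _)]

lemma ite_mul_eq_selector_combination (p : Prop) [Decidable p] (a b t : ℝ) :
    (if p then a else b) * t =
      (if p then 1 else 0) * (a * t) + (1 - if p then 1 else 0) * (b * t) := by
  split_ifs <;> ring

lemma eval_integral_of_eval_eq_ite {Ω ι : Type*} [MeasurableSpace Ω] {μ : Measure Ω}
    [Fintype ι] {F : Ω → EuclideanSpace ℝ ι} {G H : Ω → ι → ℝ} (p : ι → Prop) [DecidablePred p]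
    (hF : ∀ ω i, F ω i = if p i then G ω i else H ω i)
    (hG : ∀ i, Integrable (G · i) μ) (hH : ∀ i, Integrable (H · i) μ) (i : ι) :
    (∫ ω, F ω ∂μ) i = if p i then ∫ ω, G ω i ∂μ else ∫ ω, H ω i ∂μ := by
  have hF_int : ∀ i, Integrable (F · i) μ := fun i => by
    simp only [hF]
    split_ifs
    exacts [hG i, hH i]
  rw [eval_integral_piLp hF_int]
  simp only [hF]
  split_ifs <;> rfl

theorem product_context_lift_inner_identity_general
    (d : ℕ) (Θ : Set (EuclideanSpace ℝ (Fin d)))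
    {Ω : Type*} [MeasurableSpace Ω] (μ : Measure Ω)
    (M m : Ω → Fin d → ℝ)
    (hM_int : ∀ i, Integrable (fun ω => M ω i) μ)
    (hm_int : ∀ i, Integrable (fun ω => m ω i) μ)
    (f : Ω → EuclideanSpace ℝ (Fin d) → EuclideanSpace ℝ (Fin d))
    (hf : ∀ ω θ i, f ω θ i = if 0 ≤ θ i then M ω i else m ω i)
    (g : EuclideanSpace ℝ (Fin d) → EuclideanSpace ℝ (Fin d))
    (hg : ∀ θ, g θ = ∫ ω, f ω θ ∂μ)
    (μi νi : Fin d → ℝ)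
    (hμi : ∀ i, μi i = ∫ ω, M ω i ∂μ)
    (hνi : ∀ i, νi i = ∫ ω, m ω i ∂μ)
    (a' : EuclideanSpace ℝ (Fin d) → EuclideanSpace ℝ (Fin d × Fin 2))
    (ha' : ∀ θ i, a' θ (i, 0) = (if 0 ≤ θ i then (1 : ℝ) else 0) ∧
      a' θ (i, 1) = 1 - a' θ (i, 0))
    (θstar : EuclideanSpace ℝ (Fin d))
    (θstar' : EuclideanSpace ℝ (Fin d × Fin 2))
    (hθstar' : ∀ i, θstar' (i, 0) = μi i * θstar i ∧ θstar' (i, 1) = νi i * θstar i) :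
    ∀ θ ∈ Θ, (∀ i, θ i ≠ 0) →
      (⟪g θ, θstar⟫ = ⟪a' θ, θstar'⟫ ∧
       (∀ i, a' θ (i, 0) + a' θ (i, 1) = 1) ∧
       (∀ p : Fin d × Fin 2, a' θ p = 0 ∨ a' θ p = 1)) := by
  intro θ _ _
  have hgθ : ∀ i, g θ i = if 0 ≤ θ i then μi i else νi i := fun i => by
    rw [hg, eval_integral_of_eval_eq_ite _ (hf · θ) hM_int hm_int, hμi, hνi]
  refine ⟨?_, fun i => by rw [(ha' θ i).2]; ring, ?_⟩
  · rw [real_inner_eq_sum_fin_two, PiLp.inner_apply]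
    refine Finset.sum_congr rfl fun i _ => ?_
    obtain ⟨ha0, ha1⟩ := ha' θ i
    obtain ⟨hs0, hs1⟩ := hθstar' i
    rw [RCLike.inner_apply, conj_trivial, mul_comm, hgθ, ha1, ha0, hs0, hs1,
      ite_mul_eq_selector_combination]
  · rintro ⟨i, j⟩
    obtain ⟨ha0, ha1⟩ := ha' θ i
    fin_cases j <;> split_ifs at ha0 <;> simp_all

/-- inner-product identity of Theorem 3: with μ_i = ∫ M_i dμ, ν_i = ∫ m_i dμ,
a'(θ) ∈ {0,1}^{2d} encoding the signs of θ (coordinates indexed by Fin d × Fin 2, where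
(i,0) plays the role of 2i−1 and (i,1) the role of 2i), and θ'⋆ the lifted parameter,
one has ⟨g(θ), θ⋆⟩ = ⟨a'(θ), θ'⋆⟩ whenever all coordinates of θ are nonzero; moreover
a'(θ) lies in the fixed action set {a' ∈ {0,1}^{2d} : a'_{2i−1} + a'_{2i} = 1 ∀ i}. -/
theorem product_context_lift_inner_identity
    (d : ℕ) (Θ : Set (EuclideanSpace ℝ (Fin d)))
    {Ω : Type*} [MeasurableSpace Ω] (μ : Measure Ω) [IsProbabilityMeasure μ]
    (A : Ω → Fin d → Set ℝ)
    (hne : ∀ ω i, (A ω i).Nonempty) (hcomp : ∀ ω i, IsCompact (A ω i))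
    (M m : Ω → Fin d → ℝ)
    (hM : ∀ ω i, IsGreatest (A ω i) (M ω i))
    (hm : ∀ ω i, IsLeast (A ω i) (m ω i))
    (hM_int : ∀ i, Integrable (fun ω => M ω i) μ)
    (hm_int : ∀ i, Integrable (fun ω => m ω i) μ)
    (f : Ω → EuclideanSpace ℝ (Fin d) → EuclideanSpace ℝ (Fin d))
    (hf : ∀ ω θ i, f ω θ i = if 0 ≤ θ i then M ω i else m ω i)
    (g : EuclideanSpace ℝ (Fin d) → EuclideanSpace ℝ (Fin d))
    (hg : ∀ θ, g θ = ∫ ω, f ω θ ∂μ)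
    (μi νi : Fin d → ℝ)
    (hμi : ∀ i, μi i = ∫ ω, M ω i ∂μ)
    (hνi : ∀ i, νi i = ∫ ω, m ω i ∂μ)
    (a' : EuclideanSpace ℝ (Fin d) → EuclideanSpace ℝ (Fin d × Fin 2))
    (ha' : ∀ θ i, a' θ (i, 0) = (if 0 ≤ θ i then (1 : ℝ) else 0) ∧
      a' θ (i, 1) = 1 - a' θ (i, 0))
    (θstar : EuclideanSpace ℝ (Fin d))
    (θstar' : EuclideanSpace ℝ (Fin d × Fin 2))
    (hθstar' : ∀ i, θstar' (i, 0) = μi i * θstar i ∧ θstar' (i, 1) = νi i * θstar i) :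
    ∀ θ ∈ Θ, (∀ i, θ i ≠ 0) →
      (⟪g θ, θstar⟫ = ⟪a' θ, θstar'⟫ ∧
       (∀ i, a' θ (i, 0) + a' θ (i, 1) = 1) ∧
       (∀ p : Fin d × Fin 2, a' θ p = 0 ∨ a' θ p = 1)) :=
  product_context_lift_inner_identity_general d Θ μ M m hM_int hm_int f hf g hg μi νi hμi hνi a' ha'
    θstar θstar' hθstar'
end
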